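/- Let C_h and C_z be n×n Hermitian positive definite complex matrices, let p_a, p_b ≥ 0, and set C_a := p_a·C_h + C_z, C_b := p_b·C_h + C_z, and Γ := C_z^{−1/2} C_h C_z^{−1/2}. Then tr{C_h C_b⁻¹ C_h C_a⁻¹} ≤ tr{Γ²}. (Upper bound in the paper's inequality (16).) -/

import Mathlib

/-!
Since `C_z^{-1/2}` squares to `C_z⁻¹`, cyclicity of the trace turns `tr Γ²` into
`tr (C_h C_z⁻¹ C_h C_z⁻¹)`. In the Loewner order `C_z ≤ C_a` and `C_z ≤ C_b`, so by operator
antitonicity of inversion `0 ≤ C_a⁻¹ ≤ C_z⁻¹` and `C_b⁻¹ ≤ C_z⁻¹`. Since `tr (P Q) ≥ 0` for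
`P, Q ≥ 0`, the trace `tr (H B H A)` is monotone in each of `A` and `B` (within the positive
cone), and replacing the two inverses by `C_z⁻¹` one at a time gives the bound.
-/

open Matrix
open scoped ComplexOrder

/-- The square root of a positive semidefinite matrix, as defined in the older Mathlib
(`Matrix.PosSemidef.sqrt`, removed since). -/
noncomputable def Matrix.PosSemidef.sqrt {n 𝕜 : Type*} [Fintype n] [DecidableEq n] [RCLike 𝕜]
    {A : Matrix n n 𝕜} (hA : A.PosSemidef) : Matrix n n 𝕜 :=
  hA.1.eigenvectorUnitary.1 * diagonal ((↑) ∘ (√·) ∘ hA.1.eigenvalues) *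
    (star hA.1.eigenvectorUnitary : Matrix n n 𝕜)

open scoped MatrixOrder

section

variable {n 𝕜 : Type*} [Fintype n] [DecidableEq n] [RCLike 𝕜]

lemma Matrix.PosSemidef.sqrt_eq_cfcSqrt {A : Matrix n n 𝕜} (hA : A.PosSemidef) :
    hA.sqrt = CFC.sqrt A := by
  rw [CFC.sqrt_eq_real_sqrt A hA.nonneg, cfcₙ_eq_cfc, hA.isHermitian.cfc_eq]
  rfl

lemma Matrix.PosSemidef.sqrt_mul_self {A : Matrix n n 𝕜} (hA : A.PosSemidef) :
    hA.sqrt * hA.sqrt = A := by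
  rw [hA.sqrt_eq_cfcSqrt, CFC.sqrt_mul_sqrt_self A hA.nonneg]

lemma Matrix.PosSemidef.trace_mul_nonneg {A B : Matrix n n 𝕜} (hA : A.PosSemidef)
    (hB : B.PosSemidef) : 0 ≤ (A * B).trace := by
  have hR : (CFC.sqrt B).IsHermitian := (CFC.sqrt_nonneg B).posSemidef.isHermitian
  rw [← CFC.sqrt_mul_sqrt_self B hB.nonneg, ← Matrix.mul_assoc, trace_mul_cycle]
  simpa [hR.eq] using (hA.conjTranspose_mul_mul_same (CFC.sqrt B)).trace_nonneg

lemma Matrix.trace_mul_mul_mul_le_of_le {H A A' B B' : Matrix n n 𝕜} (hH : H.IsHermitian)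
    (hA : 0 ≤ A) (hAA' : A ≤ A') (hBB' : B ≤ B') (hB' : 0 ≤ B') :
    (H * B * H * A).trace ≤ (H * B' * H * A').trace := by
  have hB'_conj : (H * B' * H).PosSemidef := by
    simpa [hH.eq] using hB'.posSemidef.conjTranspose_mul_mul_same H
  have hBB'_conj : (H * (B' - B) * H).PosSemidef := by
    simpa [hH.eq] using (le_iff.mp hBB').conjTranspose_mul_mul_same H
  have hsplit : (H * B' * H * A').trace = (H * B * H * A).trace
      + (H * B' * H * (A' - A)).trace + (H * (B' - B) * H * A).trace := by
    simp only [Matrix.mul_sub, Matrix.sub_mul, trace_sub]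
    ring
  rw [hsplit, add_assoc]
  exact le_add_of_nonneg_right (add_nonneg (hB'_conj.trace_mul_nonneg (le_iff.mp hAA'))
    (hBB'_conj.trace_mul_nonneg hA.posSemidef))

open scoped Matrix.Norms.L2Operator in
lemma Matrix.PosDef.inv_le_inv {A B : Matrix n n ℂ} (hA : A.PosDef) (hAB : A ≤ B) :
    B⁻¹ ≤ A⁻¹ := by
  simp only [nonsing_inv_eq_ringInverse]
  exact CStarAlgebra.ringInverse_le_ringInverse hAB (isStrictlyPositive_iff_posDef.mpr hA)

end

/-- Upper bound in the paper's inequality (16): with `Ca := p_a·C_h + C_z`,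
`Cb := p_b·C_h + C_z` and `Γ := C_z^{−1/2} C_h C_z^{−1/2}`,
`tr{C_h Cb⁻¹ C_h Ca⁻¹} ≤ tr{Γ²}`. -/
theorem jeffreys_trace_upper_bound {n : ℕ} (Ch Cz : Matrix (Fin n) (Fin n) ℂ)
    (hh : Ch.PosDef) (hz : Cz.PosDef)
    (pa pb : ℝ) (hpa : 0 ≤ pa) (hpb : 0 ≤ pb)
    (Ca Cb Γ : Matrix (Fin n) (Fin n) ℂ)
    (hCa : Ca = (pa : ℂ) • Ch + Cz) (hCb : Cb = (pb : ℂ) • Ch + Cz)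
    (hΓ : Γ = (hz.posSemidef.sqrt)⁻¹ * Ch * (hz.posSemidef.sqrt)⁻¹) :
    (Matrix.trace (Ch * Cb⁻¹ * Ch * Ca⁻¹)).re ≤ (Matrix.trace (Γ * Γ)).re := by
  set S := hz.posSemidef.sqrt
  have hΓΓ : (Γ * Γ).trace = (Ch * Cz⁻¹ * Ch * Cz⁻¹).trace := by
    have hSS : S⁻¹ * S⁻¹ = Cz⁻¹ := by rw [← Matrix.mul_inv_rev, hz.posSemidef.sqrt_mul_self]
    rw [hΓ, ← hSS]
    simp only [Matrix.mul_assoc]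
    rw [trace_mul_comm S⁻¹]
    simp only [Matrix.mul_assoc]
  have hsmul_nonneg {p : ℝ} (hp : 0 ≤ p) : 0 ≤ (p : ℂ) • Ch :=
    (hh.posSemidef.smul (Complex.zero_le_real.mpr hp)).nonneg
  have hCa_inv : Ca⁻¹ ≤ Cz⁻¹ := hCa ▸ hz.inv_le_inv (le_add_of_nonneg_left (hsmul_nonneg hpa))
  have hCb_inv : Cb⁻¹ ≤ Cz⁻¹ := hCb ▸ hz.inv_le_inv (le_add_of_nonneg_left (hsmul_nonneg hpb))
  have hCa_pos : Ca.PosDef := hCa ▸ hz.posSemidef_add (hsmul_nonneg hpa).posSemidef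
  rw [hΓΓ]
  exact (Complex.le_def.mp (trace_mul_mul_mul_le_of_le hh.isHermitian
    hCa_pos.inv.posSemidef.nonneg hCa_inv hCb_inv hz.inv.posSemidef.nonneg)).1
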